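/- arXiv:2601.10564 — 6 statements merged into one kernel-verified Lean document; each statement's English description precedes it below -/
import Mathlib

section
/- Let (M, R) be a Noetherian confluent MRS with normal-form function nf. Then the binary operation (a, b) ↦ nf (a*b) on the set of irreducible elements of M is associative with two-sided identity nf 1: for all irreducible a, b, c ∈ M, nf (a * nf (b*c)) = nf (nf (a*b) * c), nf (a * nf 1) = a, and nf (nf 1 * a) = a. -/
namespace MRS

/-- One-step rewriting relation of an MRS `(M, R)`. -/
def Step {M : Type*} [Monoid M] (R : M → M → Prop) (a b : M) : Prop :=
  ∃ x y s t : M, a = x * s * y ∧ b = x * t * y ∧ R s t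

/-- An element is irreducible for a relation if it only rewrites to itself. -/
def IrredRel {α : Type*} (r : α → α → Prop) (a : α) : Prop :=
  ∀ b, r a b → a = b

/-- A relation is Noetherian if there is no infinite chain of non-trivial steps. -/
def NoetherianRel {α : Type*} (r : α → α → Prop) : Prop :=
  ¬ ∃ f : ℕ → α, ∀ n, r (f n) (f (n + 1)) ∧ f n ≠ f (n + 1)

/-- Confluence of a relation. -/
def ConfluentRel {α : Type*} (r : α → α → Prop) : Prop :=
  ∀ u a b : α, Relation.ReflTransGen r u a → Relation.ReflTransGen r u b →
    ∃ c, Relation.ReflTransGen r a c ∧ Relation.ReflTransGen r b c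

/-- `nf` is a normal-form function for the MRS `(M, R)`. -/
def IsNF {M : Type*} [Monoid M] (R : M → M → Prop) (nf : M → M) : Prop :=
  ∀ u, Relation.ReflTransGen (Step R) u (nf u) ∧ IrredRel (Step R) (nf u)

end MRS

open MRS

private lemma irred_rtg {α : Type*} {r : α → α → Prop} {a b : α}
    (ha : IrredRel r a) (h : Relation.ReflTransGen r a b) : a = b := by
  induction h with
  | refl => rfl
  | tail _ hstep ih => exact ih ▸ (ih ▸ ha) _ hstep

private lemma step_mul_left {M : Type*} [Monoid M] {R : M → M → Prop} {u v : M} (a : M)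
    (h : Step R u v) : Step R (a * u) (a * v) := by
  obtain ⟨x, y, s, t, hu, hv, hR⟩ := h
  exact ⟨a * x, y, s, t, by rw [hu]; group, by rw [hv]; group, hR⟩

private lemma step_mul_right {M : Type*} [Monoid M] {R : M → M → Prop} {u v : M} (a : M)
    (h : Step R u v) : Step R (u * a) (v * a) := by
  obtain ⟨x, y, s, t, hu, hv, hR⟩ := h
  exact ⟨x, y * a, s, t, by rw [hu]; group, by rw [hv]; group, hR⟩

private lemma rtg_mul_left {M : Type*} [Monoid M] {R : M → M → Prop} {u v : M} (a : M)
    (h : Relation.ReflTransGen (Step R) u v) :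
    Relation.ReflTransGen (Step R) (a * u) (a * v) :=
  Relation.ReflTransGen.lift (a * ·) (fun _ _ => step_mul_left a) _ _ h

private lemma rtg_mul_right {M : Type*} [Monoid M] {R : M → M → Prop} {u v : M} (a : M)
    (h : Relation.ReflTransGen (Step R) u v) :
    Relation.ReflTransGen (Step R) (u * a) (v * a) :=
  Relation.ReflTransGen.lift (· * a) (fun _ _ => step_mul_right a) _ _ h

/-- Uniqueness of normal forms via confluence. -/
private lemma nf_unique {M : Type*} [Monoid M] {R : M → M → Prop}
    (hConf : ConfluentRel (Step R)) {nf : M → M} (hnf : IsNF R nf) {u v : M}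
    (h : Relation.ReflTransGen (Step R) u v) (hv : IrredRel (Step R) v) :
    nf u = v := by
  obtain ⟨c, hc1, hc2⟩ := hConf u (nf u) v (hnf u).1 h
  rw [irred_rtg (hnf u).2 hc1, irred_rtg hv hc2]

/-- The operation `(a, b) ↦ nf (a*b)` on irreducibles is associative
with two-sided identity `nf 1`. -/
theorem stmt_3 {M : Type*} [Monoid M] (R : M → M → Prop)
    (hNoeth : NoetherianRel (Step R)) (hConf : ConfluentRel (Step R))
    (nf : M → M) (hnf : IsNF R nf) :
    ∀ a b c : M, IrredRel (Step R) a → IrredRel (Step R) b → IrredRel (Step R) c →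
      nf (a * nf (b * c)) = nf (nf (a * b) * c) ∧
      nf (a * nf 1) = a ∧ nf (nf 1 * a) = a := by
  intro a b c ha hb hc
  have key : ∀ u : M, Relation.ReflTransGen (Step R) (a * b * c) u →
      nf u = nf (a * b * c) := fun u h =>
    (nf_unique hConf hnf (Relation.ReflTransGen.trans h (hnf u).1) (hnf u).2).symm
  refine ⟨?_, ?_, ?_⟩
  · have h1 : Relation.ReflTransGen (Step R) (a * b * c) (a * nf (b * c)) := by
      rw [mul_assoc]; exact rtg_mul_left a (hnf (b * c)).1
    have h2 : Relation.ReflTransGen (Step R) (a * b * c) (nf (a * b) * c) :=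
      rtg_mul_right c (hnf (a * b)).1
    rw [key _ h1, key _ h2]
  · refine irred_rtg ha ?_ |>.symm
    have : Relation.ReflTransGen (Step R) a (a * nf 1) := by
      conv_lhs => rw [← mul_one a]
      exact rtg_mul_left a (hnf 1).1
    exact Relation.ReflTransGen.trans this (hnf (a * nf 1)).1
  · refine irred_rtg ha ?_ |>.symm
    have : Relation.ReflTransGen (Step R) a (nf 1 * a) := by
      conv_lhs => rw [← one_mul a]
      exact rtg_mul_right a (hnf 1).1
    exact Relation.ReflTransGen.trans this (hnf (nf 1 * a)).1
end

section
/- Let (M, R) and (N, L) be Noetherian confluent MRS with normal-form functions nf_R and nf_L, and let φ : (M, R) → (N, L) be an MRS-homomorphism. Then the map φ♯ sending an irreducible u ∈ M to nf_L (φ u) is a monoid homomorphism between the monoids of irreducibles: for all irreducible a, b ∈ M, nf_L (φ (nf_R (a*b))) = nf_L (nf_L (φ a) * nf_L (φ b)), and nf_L (φ (nf_R 1)) = nf_L 1. -/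
/-!
Since `u →* nf u` in `M` and `φ` preserves `→*`, we get `φ u →* φ (nf u)`, and in `N` the
products `φ a * φ b →* nf (φ a) * nf (φ b)` because rewriting is compatible with
multiplication. Confluence in `N` makes `nf_L` constant along `→*`, since two irreducible
elements with a common ancestor must coincide; this identifies both sides.
-/

open Relation

namespace MRS

theorem IrredRel.eq_of_reflTransGen {α : Type*} {r : α → α → Prop} {a b : α}
    (ha : IrredRel r a) (h : ReflTransGen r a b) : a = b := by
  induction h with
  | refl => rfl
  | tail _ hstep ih => exact ha _ (ih ▸ hstep)

section Monoid

variable {M N : Type*} [Monoid M] [Monoid N] {R : M → M → Prop}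

theorem Step.mul_mul {a b : M} (x y : M) (h : Step R a b) : Step R (x * a * y) (x * b * y) := by
  obtain ⟨p, q, s, t, rfl, rfl, hst⟩ := h
  exact ⟨x * p, q * y, s, t, by simp only [mul_assoc], by simp only [mul_assoc], hst⟩

theorem reflTransGen_step_mul_mul {a b : M} (x y : M) (h : ReflTransGen (Step R) a b) :
    ReflTransGen (Step R) (x * a * y) (x * b * y) :=
  h.lift (fun u => x * u * y) fun _ _ => Step.mul_mul x y

theorem reflTransGen_step_mul {a b c d : M} (hab : ReflTransGen (Step R) a b)
    (hcd : ReflTransGen (Step R) c d) : ReflTransGen (Step R) (a * c) (b * d) := by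
  have hleft := reflTransGen_step_mul_mul 1 c hab
  have hright := reflTransGen_step_mul_mul b 1 hcd
  simp only [one_mul, mul_one] at hleft hright
  exact hleft.trans hright

theorem reflTransGen_step_map {L : N → N → Prop} (φ : M →* N)
    (hφ : ∀ u v, R u v → ReflTransGen (Step L) (φ u) (φ v)) {a b : M}
    (h : ReflTransGen (Step R) a b) : ReflTransGen (Step L) (φ a) (φ b) := by
  refine ReflTransGen.lift' φ (fun _ _ hstep => ?_) _ _ h
  obtain ⟨x, y, s, t, rfl, rfl, hst⟩ := hstep
  simpa only [Function.onFun, map_mul] using reflTransGen_step_mul_mul (φ x) (φ y) (hφ s t hst)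

theorem IsNF.eq_of_reflTransGen {nf : M → M} (hconf : ConfluentRel (Step R)) (hnf : IsNF R nf)
    {u v : M} (h : ReflTransGen (Step R) u v) : nf u = nf v := by
  obtain ⟨c, huc, hvc⟩ := hconf u (nf u) (nf v) (hnf u).1 (h.trans (hnf v).1)
  exact ((hnf u).2.eq_of_reflTransGen huc).trans ((hnf v).2.eq_of_reflTransGen hvc).symm

end Monoid

end MRS

open MRS
theorem stmt_6_general {M N : Type*} [Monoid M] [Monoid N]
    (R : M → M → Prop) (L : N → N → Prop)
    (hConfL : ConfluentRel (Step L))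
    (nfR : M → M) (hnfR : IsNF R nfR) (nfL : N → N) (hnfL : IsNF L nfL)
    (φ : M →* N)
    (hφ : ∀ u v : M, R u v → Relation.ReflTransGen (Step L) (φ u) (φ v)) :
    (∀ a b : M, IrredRel (Step R) a → IrredRel (Step R) b →
      nfL (φ (nfR (a * b))) = nfL (nfL (φ a) * nfL (φ b))) ∧
    nfL (φ (nfR 1)) = nfL 1 := by
  have nfL_map_nfR (u : M) : nfL (φ (nfR u)) = nfL (φ u) :=
    (hnfL.eq_of_reflTransGen hConfL (reflTransGen_step_map φ hφ (hnfR u).1)).symm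
  refine ⟨fun a b _ _ => ?_, by rw [nfL_map_nfR, map_one]⟩
  rw [nfL_map_nfR, map_mul]
  exact hnfL.eq_of_reflTransGen hConfL (reflTransGen_step_mul (hnfL _).1 (hnfL _).1)

/-- `φ♯ : u ↦ nf_L (φ u)` is a monoid homomorphism between the monoids of
irreducibles. -/
theorem stmt_6 {M N : Type*} [Monoid M] [Monoid N]
    (R : M → M → Prop) (L : N → N → Prop)
    (hNoethR : NoetherianRel (Step R)) (hConfR : ConfluentRel (Step R))
    (hNoethL : NoetherianRel (Step L)) (hConfL : ConfluentRel (Step L))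
    (nfR : M → M) (hnfR : IsNF R nfR) (nfL : N → N) (hnfL : IsNF L nfL)
    (φ : M →* N)
    (hφ : ∀ u v : M, R u v → Relation.ReflTransGen (Step L) (φ u) (φ v)) :
    (∀ a b : M, IrredRel (Step R) a → IrredRel (Step R) b →
      nfL (φ (nfR (a * b))) = nfL (nfL (φ a) * nfL (φ b))) ∧
    nfL (φ (nfR 1)) = nfL 1 :=
  stmt_6_general R L hConfL nfR hnfR nfL hnfL φ hφ
end

section
/- Let M be a monoid and let nf be a normal-form function for the Noetherian confluent MRS (F_M, R_M). Then ν_M : M → F_M is injective and for all a, b ∈ M, nf (ν_M a * ν_M b) = ν_M (a*b). (Hence ν_M is a monoid isomorphism from M onto the monoid of irreducibles of (F_M, R_M), i.e. IG(M) = M.) -/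
open MRS

namespace MRS

/-- `ν_M : M → F_M`: sends `1` to the empty word and `m ≠ 1` to the single-letter word. -/
noncomputable def nu {M : Type*} [Monoid M] (m : M) : FreeMonoid {x : M // x ≠ 1} :=
  letI := Classical.dec (m = 1)
  if h : m = 1 then 1 else FreeMonoid.of ⟨m, h⟩

/-- The canonical rewriting relation `R_M` on `F_M`. -/
def RM (M : Type*) [Monoid M] :
    FreeMonoid {x : M // x ≠ 1} → FreeMonoid {x : M // x ≠ 1} → Prop :=
  fun u v => ∃ a b : M, u = nu a * nu b ∧ v = nu (a * b)

end MRS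

/-!
Evaluating words in `M` gives a monoid hom `F_M →* M` that is a left inverse of `ν_M` and is
invariant under `R_M`, hence under `→_{R_M}*`. Merging the first two letters `c₁ c₂` of a word into
`ν_M (c₁ c₂)` is a rewriting step that shortens it, so irreducible words have length at most
one and are therefore of the form `ν_M m`, with `m` their evaluation. Applied to `nf (ν_M a * ν_M b)`, whose evaluation
is `a * b`, this gives `ν_M (a * b)`.
-/

namespace MRS

theorem Step.map_eq {M N : Type*} [Monoid M] [Monoid N] {R : M → M → Prop} (f : M →* N)
    (hf : ∀ s t, R s t → f s = f t) {u v : M} (h : Step R u v) : f u = f v := by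
  obtain ⟨x, y, s, t, rfl, rfl, hst⟩ := h
  simp only [map_mul, hf s t hst]

theorem ReflTransGen.map_eq_of_step {M N : Type*} [Monoid M] [Monoid N] {R : M → M → Prop}
    (f : M →* N) (hf : ∀ s t, R s t → f s = f t) {u v : M}
    (h : Relation.ReflTransGen (Step R) u v) : f u = f v := by
  induction h with
  | refl => rfl
  | tail _ hstep ih => exact ih.trans (hstep.map_eq f hf)

variable {M : Type*} [Monoid M]

noncomputable def eval : FreeMonoid {x : M // x ≠ 1} →* M :=
  FreeMonoid.lift Subtype.val

@[simp]
theorem eval_of (c : {x : M // x ≠ 1}) : eval (FreeMonoid.of c) = c.val :=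
  FreeMonoid.lift_eval_of _ _

@[simp]
theorem nu_one : nu (1 : M) = 1 := by
  simp [nu]

theorem nu_of_ne_one {m : M} (h : m ≠ 1) : nu m = FreeMonoid.of ⟨m, h⟩ := by
  simp [nu, h]

@[simp]
theorem eval_nu (m : M) : eval (nu m) = m := by
  by_cases h : m = 1
  · simp [h]
  · simp [nu_of_ne_one h]

theorem nu_injective : Function.Injective (nu (M := M)) :=
  Function.LeftInverse.injective eval_nu

theorem length_nu_le_one (m : M) : (nu m).length ≤ 1 := by
  by_cases h : m = 1
  · simp [h]
  · simp [nu_of_ne_one h]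

theorem eval_eq_of_RM {u v : FreeMonoid {x : M // x ≠ 1}} (h : RM M u v) : eval u = eval v := by
  obtain ⟨a, b, rfl, rfl⟩ := h
  simp

theorem length_le_one_of_irred {u : FreeMonoid {x : M // x ≠ 1}}
    (hu : IrredRel (Step (RM M)) u) : u.length ≤ 1 := by
  match hl : u.toList with
  | [] | [_] => simp [FreeMonoid.length, hl]
  | c₁ :: c₂ :: rest =>
    have hsplit : u = 1 * (FreeMonoid.of c₁ * FreeMonoid.of c₂) * FreeMonoid.ofList rest := by
      rw [← FreeMonoid.ofList_toList u, hl]; rfl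
    have hmerge : Step (RM M) u (1 * nu (c₁.val * c₂.val) * FreeMonoid.ofList rest) :=
      ⟨_, _, _, _, hsplit, rfl, c₁.val, c₂.val, by rw [nu_of_ne_one c₁.prop, nu_of_ne_one c₂.prop],
        rfl⟩
    have hlen := congrArg FreeMonoid.length (hu _ hmerge)
    have := length_nu_le_one (c₁.val * c₂.val)
    rw [hsplit] at hlen
    simp only [FreeMonoid.length_mul, FreeMonoid.length_of, FreeMonoid.length_one] at hlen
    omega

theorem eq_nu_eval_of_length_le_one {u : FreeMonoid {x : M // x ≠ 1}} (hu : u.length ≤ 1) :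
    u = nu (eval u) := by
  obtain h | h : u.length = 0 ∨ u.length = 1 := by omega
  · simp [FreeMonoid.length_eq_zero.mp h]
  · obtain ⟨c, rfl⟩ := FreeMonoid.length_eq_one.mp h
    rw [eval_of, nu_of_ne_one c.prop]

theorem eq_nu_eval_of_irred {u : FreeMonoid {x : M // x ≠ 1}}
    (hu : IrredRel (Step (RM M)) u) : u = nu (eval u) :=
  eq_nu_eval_of_length_le_one (length_le_one_of_irred hu)

end MRS

/-- `ν_M` is injective and `nf (ν_M a * ν_M b) = ν_M (a*b)`, so `ν_M` is a
monoid isomorphism onto the monoid of irreducibles of `(F_M, R_M)`. -/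
theorem stmt_10 {M : Type*} [Monoid M]
    (nf : FreeMonoid {x : M // x ≠ 1} → FreeMonoid {x : M // x ≠ 1})
    (hnf : IsNF (RM M) nf) :
    Function.Injective (nu (M := M)) ∧
      ∀ a b : M, nf (nu a * nu b) = nu (a * b) := by
  refine ⟨nu_injective, fun a b => ?_⟩
  obtain ⟨hreduces, hirred⟩ := hnf (nu a * nu b)
  have heval : eval (nf (nu a * nu b)) = a * b := by
    rw [← ReflTransGen.map_eq_of_step eval (fun _ _ => eval_eq_of_RM) hreduces]
    simp
  rw [eq_nu_eval_of_irred hirred, heval]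
end

section
/- Let (A, R) be an MRS, let (a, b) be a pair with R a b, and let L be the relation with L u v iff R u v ∧ ¬(u = a ∧ v = b). If a ↔_L* b (a generalized elementary Tietze transformation of type 2), then for all u, v ∈ A, u ↔_R* v iff u ↔_L* v; in particular the quotient monoids A/↔_R* and A/↔_L* coincide. -/
open MRS

open MRS in
lemma step_congr {A : Type*} [Monoid A] (L : A → A → Prop) (x y : A) :
    ∀ {s t : A}, Relation.EqvGen (Step L) s t →
      Relation.EqvGen (Step L) (x * s * y) (x * t * y) := by
  intro s t h
  induction h with
  | rel u v huv =>
    obtain ⟨p, q, c, d, hu, hv, hcd⟩ := huv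
    exact Relation.EqvGen.rel _ _ ⟨x * p, q * y, c, d, by
      rw [hu]; group, by rw [hv]; group, hcd⟩
  | refl u => exact Relation.EqvGen.refl _
  | symm u v _ ih => exact ih.symm _ _
  | trans u v w _ _ ih1 ih2 => exact ih1.trans _ _ _ ih2

/-- A GETT of type 2 does not change `↔*`. -/
theorem stmt_13 {A : Type*} [Monoid A] (R : A → A → Prop) (a b : A)
    (hab : R a b)
    (L : A → A → Prop) (hL : ∀ u v : A, L u v ↔ (R u v ∧ ¬(u = a ∧ v = b)))
    (h2 : Relation.EqvGen (Step L) a b) :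
    ∀ u v : A, Relation.EqvGen (Step R) u v ↔ Relation.EqvGen (Step L) u v := by
  intro u v
  constructor
  · intro h
    induction h with
    | rel p q hpq =>
      obtain ⟨x, y, s, t, hp, hq, hst⟩ := hpq
      by_cases hc : s = a ∧ t = b
      · subst hp hq
        obtain ⟨hs, ht⟩ := hc; subst hs ht
        exact step_congr L x y h2
      · exact Relation.EqvGen.rel _ _ ⟨x, y, s, t, hp, hq, (hL s t).mpr ⟨hst, hc⟩⟩
    | refl p => exact Relation.EqvGen.refl _
    | symm p q _ ih => exact ih.symm _ _
    | trans p q r _ _ ih1 ih2 => exact ih1.trans _ _ _ ih2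
  · intro h
    refine Relation.EqvGen.mono ?_ _ _ h
    rintro p q ⟨x, y, s, t, hp, hq, hst⟩
    exact ⟨x, y, s, t, hp, hq, ((hL s t).mp hst).1⟩
end

section
/- Let A be a monoid, R a binary relation on A, and a ∈ A. Let B = Monoid.Coprod A (FreeMonoid Unit) be the free product of A with the free monoid on one generator, with canonical homomorphisms inl : A → B and inr : FreeMonoid Unit → B, and define the relation L on B by: L u w iff (∃ s t, R s t ∧ u = inl s ∧ w = inl t) ∨ (u = inr (FreeMonoid.of ()) ∧ w = inl a) (a generalized elementary Tietze transformation of type 3). Then the quotient of B by the monoid congruence generated by L is isomorphic, as a monoid, to the quotient of A by the monoid congruence generated by R: Nonempty ((conGen L).Quotient ≃* (conGen R).Quotient). -/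
open MRS
/-- A GETT of type 3 does not change the presented monoid. -/
theorem stmt_14 {A : Type*} [Monoid A] (R : A → A → Prop) (a : A)
    (L : Monoid.Coprod A (FreeMonoid Unit) → Monoid.Coprod A (FreeMonoid Unit) → Prop)
    (hL : ∀ u w : Monoid.Coprod A (FreeMonoid Unit),
      L u w ↔ ((∃ s t : A, R s t ∧ u = Monoid.Coprod.inl s ∧ w = Monoid.Coprod.inl t) ∨
        (u = Monoid.Coprod.inr (FreeMonoid.of ()) ∧ w = Monoid.Coprod.inl a))) :
    Nonempty ((conGen L).Quotient ≃* (conGen R).Quotient) := by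
  set f : Monoid.Coprod A (FreeMonoid Unit) →* (conGen R).Quotient :=
    Monoid.Coprod.lift (conGen R).mk' (FreeMonoid.lift fun _ => (conGen R).mk' a) with hf
  have hfle : conGen L ≤ Con.ker f := by
    apply Con.conGen_le.2
    intro u w huw
    rcases (hL u w).1 huw with ⟨s, t, hst, rfl, rfl⟩ | ⟨rfl, rfl⟩
    · show f _ = f _
      simp only [hf, Monoid.Coprod.lift_apply_inl]
      exact (Con.eq _).2 (ConGen.Rel.of _ _ hst)
    · show f _ = f _
      simp [hf]
  set φ : (conGen L).Quotient →* (conGen R).Quotient := Con.lift _ f hfle with hφ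
  have hRle : conGen R ≤ Con.ker ((conGen L).mk'.comp Monoid.Coprod.inl) := by
    apply Con.conGen_le.2
    intro s t hst
    show ((conGen L).mk' (Monoid.Coprod.inl s)) = (conGen L).mk' (Monoid.Coprod.inl t)
    exact (Con.eq _).2 (ConGen.Rel.of _ _ ((hL _ _).2 (Or.inl ⟨s, t, hst, rfl, rfl⟩)))
  set ψ : (conGen R).Quotient →* (conGen L).Quotient :=
    Con.lift _ ((conGen L).mk'.comp Monoid.Coprod.inl) hRle with hψ
  have h1 : ψ.comp φ = MonoidHom.id _ := by
    refine Con.lift_funext _ _ fun b => ?_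
    induction b using Monoid.Coprod.induction_on with
      | inl x => simp [hφ, hψ, hf]
      | inr y =>
        induction y using FreeMonoid.inductionOn' with
        | one => simp
        | of_mul u l ih =>
          rw [map_mul, Con.coe_mul, map_mul, map_mul, ih]
          congr 1
          show ψ (φ ((conGen L).mk' (Monoid.Coprod.inr (FreeMonoid.of u)))) = _
          simp only [hφ, hψ, Con.lift_mk', hf, Monoid.Coprod.lift_apply_inr,
            FreeMonoid.lift_eval_of, MonoidHom.comp_apply]
          exact ((Con.eq _).2 (ConGen.Rel.of _ _
            ((hL _ _).2 (Or.inr ⟨rfl, rfl⟩)))).symm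
      | mul x y hx hy => rw [Con.coe_mul, map_mul, map_mul, hx, hy]
  have h2 : φ.comp ψ = MonoidHom.id _ := by
    refine Con.lift_funext _ _ fun s => ?_
    simp [hφ, hψ, hf]
  exact ⟨MonoidHom.toMulEquiv φ ψ h1 h2⟩
end

section
/- Let (M, R) be a Noetherian confluent MRS and J ⊆ R a coherent sub-relation with normal-form function nf_J for (M, J). If a, b ∈ M are irreducible for R (hence J-irreducible) and a and b are related by the equivalence relation generated by stepJ, then a = b. (This is the injectivity of the canonical map I(M, R) → M_J/↔_{R_J}*.) -/
open MRS

namespace MRS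

/-- The one-step relation of the collapsed system `(M_J, R_J)`, expressed on `M`. -/
def StepJ {M : Type*} [Monoid M] (R J : M → M → Prop) (nfJ : M → M) (a b : M) : Prop :=
  ∃ x y s t : M, IrredRel (Step J) x ∧ IrredRel (Step J) y ∧ R s t ∧ ¬ J s t ∧
    a = nfJ (x * s * y) ∧ b = nfJ (x * t * y)

end MRS
/-- Two `R`-irreducible elements related by the equivalence relation
generated by `stepJ` are equal. -/
theorem stmt_17 {M : Type*} [Monoid M] (R J : M → M → Prop)
    (hJR : ∀ s t : M, J s t → R s t)
    (hNoethR : NoetherianRel (Step R)) (hConfR : ConfluentRel (Step R))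
    (hConfJ : ConfluentRel (Step J))
    (nfJ : M → M) (hnfJ : IsNF J nfJ)
    (hSNoeth : NoetherianRel (StepJ R J nfJ))
    (hSConf : ∀ u a b : M, IrredRel (Step J) u →
      Relation.ReflTransGen (StepJ R J nfJ) u a →
      Relation.ReflTransGen (StepJ R J nfJ) u b →
      ∃ c, Relation.ReflTransGen (StepJ R J nfJ) a c ∧
        Relation.ReflTransGen (StepJ R J nfJ) b c)
    (a b : M) (ha : IrredRel (Step R) a) (hb : IrredRel (Step R) b)
    (hab : Relation.EqvGen (StepJ R J nfJ) a b) :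
    a = b := by

  -- Each StepJ step implies R-equivalence.
  have rtg_eqv : ∀ {r : M → M → Prop} {u v : M}, Relation.ReflTransGen r u v →
      Relation.EqvGen r u v := by
    intro r u v h
    induction h with
    | refl => exact Relation.EqvGen.refl _
    | tail _ h ih => exact Relation.EqvGen.trans _ _ _ ih (Relation.EqvGen.rel _ _ h)
  have stepJ_eqv : ∀ u v : M, StepJ R J nfJ u v → Relation.EqvGen (Step R) u v := by
    intro u v huv
    obtain ⟨x, y, s, t, _, _, hst, _, hu, hv⟩ := huv
    have h1 : Relation.ReflTransGen (Step R) (x * s * y) u := by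
      rw [hu]
      exact Relation.ReflTransGen.mono (r := Step J) (p := Step R) (by
        rintro p q ⟨x', y', s', t', hp, hq, hJ⟩
        exact ⟨x', y', s', t', hp, hq, hJR _ _ hJ⟩) _ _ ((hnfJ (x * s * y)).1)
    have h2 : Relation.ReflTransGen (Step R) (x * t * y) v := by
      rw [hv]
      exact Relation.ReflTransGen.mono (r := Step J) (p := Step R) (by
        rintro p q ⟨x', y', s', t', hp, hq, hJ⟩
        exact ⟨x', y', s', t', hp, hq, hJR _ _ hJ⟩) _ _ ((hnfJ (x * t * y)).1)
    have hmid : Step R (x * s * y) (x * t * y) := ⟨x, y, s, t, rfl, rfl, hst⟩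
    exact Relation.EqvGen.trans _ _ _
      (Relation.EqvGen.symm _ _ (rtg_eqv h1))
      (Relation.EqvGen.trans _ _ _ (Relation.EqvGen.rel _ _ hmid) (rtg_eqv h2))
  have habR : Relation.EqvGen (Step R) a b := by
    clear ha hb
    induction hab with
    | rel u v h => exact stepJ_eqv u v h
    | refl u => exact Relation.EqvGen.refl u
    | symm u v _ ih => exact Relation.EqvGen.symm _ _ ih
    | trans u v w _ _ ih1 ih2 => exact Relation.EqvGen.trans _ _ _ ih1 ih2
  -- Church-Rosser for (Step R) from confluence.
  have cr : ∀ u v : M, Relation.EqvGen (Step R) u v →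
      ∃ c, Relation.ReflTransGen (Step R) u c ∧ Relation.ReflTransGen (Step R) v c := by
    intro u v h
    induction h with
    | rel u v h => exact ⟨v, Relation.ReflTransGen.single h, Relation.ReflTransGen.refl⟩
    | refl u => exact ⟨u, Relation.ReflTransGen.refl, Relation.ReflTransGen.refl⟩
    | symm u v _ ih => obtain ⟨c, h1, h2⟩ := ih; exact ⟨c, h2, h1⟩
    | trans u v w _ _ ih1 ih2 =>
      obtain ⟨c, h1, h2⟩ := ih1
      obtain ⟨d, h3, h4⟩ := ih2
      obtain ⟨e, h5, h6⟩ := hConfR v c d h2 h3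
      exact ⟨e, h1.trans h5, h4.trans h6⟩
  obtain ⟨c, h1, h2⟩ := cr a b habR
  have irr_eq : ∀ {u v : M}, IrredRel (Step R) u → Relation.ReflTransGen (Step R) u v →
      u = v := by
    intro u v hu h
    induction h with
    | refl => rfl
    | tail h' hs ih => exact ih.trans (ih ▸ hu _ (ih ▸ hs))
  have e1 := irr_eq ha h1
  have e2 := irr_eq hb h2
  rw [e1, e2]
end
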